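/- Let K be a field, s ≥ 2, σ_1, ..., σ_s distinct homomorphisms from K to a field Ω restricting to the identity on a subfield k, and suppose K = k(α_1, ..., α_{n}). Let F_q ⊆ k be a finite subfield and T ∈ k transcendental over F_q. Then there exist f_1, ..., f_n ∈ F_q[T], each zero or of degree at most s - 1, such that α = Σ_j f_j α_j satisfies σ_1(α) ≠ σ_l(α) for all l = 2, ..., s. -/

import Mathlib

/-!
For `l ≠ 1` the vector `v_l = (σ_1 α_j - σ_l α_j)_j` is nonzero, since `σ_1 ≠ σ_l` and the `α_j`
generate `K`. We need `x = (x_j)` with `v_l · x ≠ 0` for the `s - 1` indices `l ≠ 1`, i.e. a point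
outside `s - 1` hyperplanes through the origin. Such a point exists on any grid `S^n` with
`#S ≥ s`, and `S = {1, T, …, T^(s-1)}` has `s` elements because `T` is transcendental over `F_q`.
-/
open MvPolynomial Finset

section LinearForm

variable {R σ : Type*} [CommRing R] [Fintype σ]

noncomputable def MvPolynomial.linearForm (v : σ → R) : MvPolynomial σ R :=
  ∑ j, C (v j) * X j

theorem MvPolynomial.eval_linearForm (v x : σ → R) : eval x (linearForm v) = v ⬝ᵥ x := by
  simp [linearForm, dotProduct]

theorem MvPolynomial.totalDegree_linearForm_le [Nontrivial R] (v : σ → R) :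
    (linearForm v).totalDegree ≤ 1 :=
  (totalDegree_finsetSum _ _).trans <| Finset.sup_le fun j _ ↦
    (totalDegree_mul _ _).trans (by simp [totalDegree_X])

theorem MvPolynomial.linearForm_ne_zero {v : σ → R} (hv : v ≠ 0) : linearForm v ≠ 0 := by
  classical
  obtain ⟨j, hj⟩ := Function.ne_iff.mp hv
  intro h
  apply hj
  simpa [linearForm, coeff_X, coeff_sum, Finsupp.single_left_inj one_ne_zero] using
    congr_arg (coeff (Finsupp.single j 1)) h

end LinearForm

/-- The product of the linear forms has degree `#I < #S` in each variable, so by the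
Combinatorial Nullstellensatz it cannot vanish on the whole grid `S^σ`. -/
theorem exists_mem_grid_forall_dotProduct_ne_zero {R σ ι : Type*} [CommRing R] [IsDomain R]
    [Fintype σ] {I : Finset ι} {v : ι → σ → R} (hv : ∀ i ∈ I, v i ≠ 0) {S : Finset R}
    (hS : #I < #S) : ∃ x : σ → R, (∀ j, x j ∈ S) ∧ ∀ i ∈ I, v i ⬝ᵥ x ≠ 0 := by
  set P := ∏ i ∈ I, linearForm (v i)
  have hP : P ≠ 0 := Finset.prod_ne_zero_iff.mpr fun i hi ↦ linearForm_ne_zero (hv i hi)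
  have hdeg : ∀ j, P.degreeOf j < #S := fun j ↦ calc
    P.degreeOf j ≤ P.totalDegree := degreeOf_le_totalDegree P j
    _ ≤ ∑ i ∈ I, (linearForm (v i)).totalDegree := totalDegree_finsetProd _ _
    _ ≤ ∑ i ∈ I, 1 := Finset.sum_le_sum fun i _ ↦ totalDegree_linearForm_le (v i)
    _ < #S := by simpa using hS
  by_contra! h
  refine hP (eq_zero_of_eval_zero_at_prod_finset P (fun _ ↦ S) hdeg fun x hx ↦ ?_)
  obtain ⟨i, hi, hix⟩ := h x hx
  rw [eval_prod]
  exact Finset.prod_eq_zero hi (by rwa [eval_linearForm])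

theorem AlgHom.eq_of_eqOn_of_adjoin_eq_top {k K Ω : Type*} [Field k] [Field K] [Field Ω]
    [Algebra k K] [Algebra k Ω] {s : Set K} (hs : IntermediateField.adjoin k s = ⊤)
    {σ τ : K →ₐ[k] Ω} (h : Set.EqOn σ τ s) : σ = τ := by
  have := IntermediateField.algHom_ext_of_eq_adjoin k hs.symm
    (φ₁ := σ.comp (⊤ : IntermediateField k K).val) (φ₂ := τ.comp (⊤ : IntermediateField k K).val)
    fun x hx ↦ h hx
  exact AlgHom.ext fun x ↦ congr($this ⟨x, IntermediateField.mem_top⟩)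

theorem pow_injective_of_eval₂_injective {R S : Type*} [Semiring R] [Nontrivial R] [Semiring S]
    {φ : R →+* S} {T : S} (hT : Function.Injective fun f : Polynomial R ↦ f.eval₂ φ T) :
    Function.Injective (T ^ ·) := fun i j hij ↦ by
  have : (Polynomial.X ^ i : Polynomial R) = Polynomial.X ^ j := hT (by simpa using hij)
  simpa using congr_arg Polynomial.natDegree this

theorem AlgHom.map_sum_sub_map_sum {k K Ω ι : Type*} [CommRing k] [CommRing K] [CommRing Ω]
    [Algebra k K] [Algebra k Ω] [Fintype ι] (σ τ : K →ₐ[k] Ω) (c : ι → k) (α : ι → K) :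
    σ (∑ j, algebraMap k K (c j) * α j) - τ (∑ j, algebraMap k K (c j) * α j) =
      (fun j ↦ σ (α j) - τ (α j)) ⬝ᵥ fun j ↦ algebraMap k Ω (c j) := by
  simp only [map_sum, map_mul, AlgHom.commutes, dotProduct, ← Finset.sum_sub_distrib]
  exact Finset.sum_congr rfl fun j _ ↦ by ring

/-- Let `K` be a field, `s ≥ 2`, `σ_1, ..., σ_s` distinct homomorphisms
`K → Ω` restricting to the identity on a subfield `k`, `K = k(α_1, ..., α_n)`, `F_q`
a finite subfield of `k` (embedded via `φ`), and `T ∈ k` transcendental over `F_q`.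
Then there are `f_1, ..., f_n ∈ F_q[T]`, each zero or of degree at most `s - 1`,
such that `α = Σ_j f_j α_j` satisfies `σ_1(α) ≠ σ_l(α)` for all `l = 2, ..., s`. -/
theorem stmt_11 (k K Ω : Type*) [Field k] [Field K] [Field Ω]
    [Algebra k K] [Algebra k Ω]
    (Fq : Type*) [Field Fq] (φ : Fq →+* k) (T : k)
    (hT : Function.Injective fun f : Polynomial Fq => Polynomial.eval₂ φ T f)
    (s : ℕ) (hs : 2 ≤ s) (σ : Fin s → (K →ₐ[k] Ω)) (hσ : Function.Injective σ)
    (n : ℕ) (α : Fin n → K)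
    (hgen : IntermediateField.adjoin k (Set.range α) = ⊤) :
    ∃ f : Fin n → Polynomial Fq, (∀ j, f j = 0 ∨ (f j).natDegree ≤ s - 1) ∧
      ∀ l : Fin s, l ≠ ⟨0, by omega⟩ →
        σ ⟨0, by omega⟩ (∑ j, algebraMap k K (Polynomial.eval₂ φ T (f j)) * α j) ≠
          σ l (∑ j, algebraMap k K (Polynomial.eval₂ φ T (f j)) * α j) := by
  classical
  set z : Fin s := ⟨0, by omega⟩
  set v : Fin s → Fin n → Ω := fun l j ↦ σ z (α j) - σ l (α j)
  have hv : ∀ l ∈ univ.erase z, v l ≠ 0 := fun l hl hvl ↦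
    (mem_erase.mp hl).1 <| hσ <| AlgHom.eq_of_eqOn_of_adjoin_eq_top hgen <| by
      rintro _ ⟨j, rfl⟩
      exact (sub_eq_zero.mp (congrFun hvl j)).symm
  have hgrid : Function.Injective fun i ↦ algebraMap k Ω (T ^ i) :=
    (algebraMap k Ω).injective.comp (pow_injective_of_eval₂_injective hT)
  have hS : #(univ.erase z) < #((range s).image fun i ↦ algebraMap k Ω (T ^ i)) := by
    rw [card_image_of_injective _ hgrid, card_erase_of_mem (mem_univ z)]
    simp only [card_univ, Fintype.card_fin, card_range]
    omega
  obtain ⟨x, hxS, hx⟩ := exists_mem_grid_forall_dotProduct_ne_zero hv hS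
  choose e he hxe using fun j ↦ mem_image.mp (hxS j)
  refine ⟨fun j ↦ Polynomial.X ^ e j, fun j ↦ Or.inr ?_, fun l hl heq ↦ ?_⟩
  · exact (Polynomial.natDegree_X_pow_le _).trans (by have := mem_range.mp (he j); omega)
  apply hx l (mem_erase.mpr ⟨hl, mem_univ l⟩)
  have hx' : x = fun j ↦ algebraMap k Ω (Polynomial.eval₂ φ T (Polynomial.X ^ e j)) := by
    funext j; simp [← hxe j]
  rw [hx', ← AlgHom.map_sum_sub_map_sum, heq, sub_self]
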